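/- Let B be a normed vector space, T > 0, and let ξ, η : [0,T] → B be continuous. For N > 0 define the hitting time τ_N^ξ = inf{ t ∈ [0,T] : ‖ξ(t)‖ ≥ N } (with inf ∅ = +∞ and the convention t ∧ (+∞) = t). Then for all real numbers N ≥ R > 0 and every t ∈ [0,T]: | min( sup_{s∈[0,t]} ‖ξ(s)‖ , R ) − min( sup_{s∈[0,t]} ‖η(s)‖ , R ) | ≤ sup_{s ∈ [0, T ∧ τ_N^ξ ∧ τ_N^η]} ‖ξ(s) − η(s)‖. -/

import Mathlib

/-!
Let `τ = T ∧ τ_N^ξ ∧ τ_N^η` and let `D` be the supremum of `‖ξ - η‖` on `[0, τ]`.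
If `t ≤ τ`, the running suprema of `‖ξ‖` and `‖η‖` at time `t` differ by at most `D`,
and truncation at `R` is `1`-Lipschitz. If `τ < t`, then `τ < T` is a genuine hitting time:
by continuity one of `‖ξ τ‖`, `‖η τ‖` is `≥ N ≥ R`, so both running suprema are `≥ R - D`
and both truncated values lie in `[R - D, R]`.
-/

noncomputable section
open Set

/-- The stopped time `T ∧ τ_N^ξ ∧ τ_N^η`, where `τ_N^ξ = inf{ t ∈ [0,T] : ‖ξ(t)‖ ≥ N }`
(with `inf ∅ = +∞` and `t ∧ (+∞) = t`); adjoining `T` to the set encodes these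
conventions. -/
def stopTime {B : Type*} [NormedAddCommGroup B] (T N : ℝ) (ξ η : ℝ → B) : ℝ :=
  sInf ({t | t ∈ Set.Icc 0 T ∧ (N ≤ ‖ξ t‖ ∨ N ≤ ‖η t‖)} ∪ {T})

lemma abs_min_sub_min_le (a b R : ℝ) : |min a R - min b R| ≤ |a - b| := by
  simpa using abs_min_sub_min_le_max a R b R

lemma abs_min_sub_min_le_of_sub_le {a b R D : ℝ} (hD : 0 ≤ D) (ha : R - D ≤ a)
    (hb : R - D ≤ b) : |min a R - min b R| ≤ D := by
  have ha' : R - D ≤ min a R := le_min ha (by linarith)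
  have hb' : R - D ≤ min b R := le_min hb (by linarith)
  rw [abs_le]
  constructor <;> linarith [min_le_right a R, min_le_right b R]

lemma csSup_image_le_csSup_image_add {α : Type*} {f g : α → ℝ} {s : Set α} {D : ℝ}
    (hs : s.Nonempty) (hg : BddAbove (g '' s)) (h : ∀ x ∈ s, f x ≤ g x + D) :
    sSup (f '' s) ≤ sSup (g '' s) + D :=
  csSup_le (hs.image f) <| by
    rintro _ ⟨x, hx, rfl⟩
    linarith [h x hx, le_csSup hg ⟨x, hx, rfl⟩]

lemma abs_csSup_image_sub_csSup_image_le {α : Type*} {f g : α → ℝ} {s : Set α} {D : ℝ}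
    (hs : s.Nonempty) (hf : BddAbove (f '' s)) (hg : BddAbove (g '' s))
    (h : ∀ x ∈ s, |f x - g x| ≤ D) :
    |sSup (f '' s) - sSup (g '' s)| ≤ D := by
  have hfg : sSup (f '' s) ≤ sSup (g '' s) + D :=
    csSup_image_le_csSup_image_add hs hg fun x hx => by linarith [abs_le.1 (h x hx)]
  have hgf : sSup (g '' s) ≤ sSup (f '' s) + D :=
    csSup_image_le_csSup_image_add hs hf fun x hx => by linarith [abs_le.1 (h x hx)]
  rw [abs_le]
  constructor <;> linarith

lemma ContinuousOn.bddAbove_norm_image_Icc {E : Type*} [SeminormedAddCommGroup E] {f : ℝ → E}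
    {a b c : ℝ} (hf : ContinuousOn f (Icc a b)) (hc : c ≤ b) :
    BddAbove ((fun u => ‖f u‖) '' Icc a c) :=
  isCompact_Icc.bddAbove_image (hf.mono (Icc_subset_Icc_right hc)).norm

section StopTime

variable {B : Type*} [NormedAddCommGroup B] {T N : ℝ} {ξ η : ℝ → B}

def hittingSet (T N : ℝ) (ξ η : ℝ → B) : Set ℝ :=
  {t | t ∈ Icc 0 T ∧ (N ≤ ‖ξ t‖ ∨ N ≤ ‖η t‖)} ∪ {T}

lemma stopTime_eq_sInf_hittingSet : stopTime T N ξ η = sInf (hittingSet T N ξ η) := rfl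

lemma hittingSet_subset_Icc (hT : 0 ≤ T) : hittingSet T N ξ η ⊆ Icc 0 T :=
  union_subset (fun _ ht => ht.1) (singleton_subset_iff.2 ⟨hT, le_rfl⟩)

lemma isClosed_hittingSet (hξ : ContinuousOn ξ (Icc 0 T)) (hη : ContinuousOn η (Icc 0 T)) :
    IsClosed (hittingSet T N ξ η) := by
  have hS : hittingSet T N ξ η = (Icc 0 T ∩ (fun t => max ‖ξ t‖ ‖η t‖) ⁻¹' Ici N) ∪ {T} := by
    ext t
    simp [hittingSet]
  rw [hS]
  exact ((ContinuousOn.sup hξ.norm hη.norm).preimage_isClosed_of_isClosed isClosed_Icc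
    isClosed_Ici).union isClosed_singleton

lemma stopTime_mem_Icc (hT : 0 ≤ T) : stopTime T N ξ η ∈ Icc 0 T := by
  rw [stopTime_eq_sInf_hittingSet]
  exact ⟨le_csInf ⟨T, Or.inr rfl⟩ fun _ ht => (hittingSet_subset_Icc hT ht).1,
    csInf_le ⟨0, fun _ ht => (hittingSet_subset_Icc hT ht).1⟩ (Or.inr rfl)⟩

lemma le_max_norm_stopTime (hT : 0 ≤ T) (hξ : ContinuousOn ξ (Icc 0 T))
    (hη : ContinuousOn η (Icc 0 T)) (hlt : stopTime T N ξ η < T) :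
    N ≤ max ‖ξ (stopTime T N ξ η)‖ ‖η (stopTime T N ξ η)‖ := by
  have hmem : stopTime T N ξ η ∈ hittingSet T N ξ η := by
    rw [stopTime_eq_sInf_hittingSet]
    exact (isClosed_hittingSet hξ hη).csInf_mem ⟨T, Or.inr rfl⟩
      ⟨0, fun _ ht => (hittingSet_subset_Icc hT ht).1⟩
  rcases hmem with ⟨_, hN⟩ | hT'
  · exact le_max_iff.2 hN
  · exact absurd (mem_singleton_iff.1 hT') hlt.ne

end StopTime

theorem statement14_general {B : Type*} [NormedAddCommGroup B]
    (T : ℝ) (ξ η : ℝ → B)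
    (hξ : ContinuousOn ξ (Set.Icc 0 T)) (hη : ContinuousOn η (Set.Icc 0 T)) :
    ∀ N R : ℝ, 0 < R → R ≤ N → ∀ t ∈ Set.Icc (0 : ℝ) T,
      |min (sSup ((fun u => ‖ξ u‖) '' Set.Icc 0 t)) R -
          min (sSup ((fun u => ‖η u‖) '' Set.Icc 0 t)) R| ≤
        sSup ((fun u => ‖ξ u - η u‖) '' Set.Icc 0 (stopTime T N ξ η)) := by
  intro N R _ hRN t ht
  have hT : 0 ≤ T := ht.1.trans ht.2
  set τ := stopTime T N ξ η
  obtain ⟨hτ0, hτT⟩ : τ ∈ Icc 0 T := stopTime_mem_Icc hT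
  set D := sSup ((fun u => ‖ξ u - η u‖) '' Icc 0 τ)
  have hD : ∀ s ∈ Icc 0 τ, ‖ξ s - η s‖ ≤ D :=
    fun s hs => le_csSup ((hξ.sub hη).bddAbove_norm_image_Icc hτT) ⟨s, hs, rfl⟩
  rcases le_or_gt t τ with htτ | hτt
  · refine (abs_min_sub_min_le _ _ R).trans <|
      abs_csSup_image_sub_csSup_image_le (nonempty_Icc.2 ht.1)
        (hξ.bddAbove_norm_image_Icc ht.2) (hη.bddAbove_norm_image_Icc ht.2) fun s hs => ?_
    exact (abs_norm_sub_norm_le _ _).trans (hD s ⟨hs.1, hs.2.trans htτ⟩)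
  · have hτ_mem : τ ∈ Icc 0 t := ⟨hτ0, hτt.le⟩
    have hhit : N ≤ max ‖ξ τ‖ ‖η τ‖ := le_max_norm_stopTime hT hξ hη (hτt.trans_le ht.2)
    have hclose : |‖ξ τ‖ - ‖η τ‖| ≤ D :=
      (abs_norm_sub_norm_le _ _).trans (hD τ ⟨hτ0, le_rfl⟩)
    have hlow : R - D ≤ ‖ξ τ‖ ∧ R - D ≤ ‖η τ‖ := by
      rcases le_max_iff.1 hhit with h | h <;> constructor <;> linarith [abs_le.1 hclose]
    exact abs_min_sub_min_le_of_sub_le ((abs_nonneg _).trans hclose)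
      (hlow.1.trans (le_csSup (hξ.bddAbove_norm_image_Icc ht.2) ⟨τ, hτ_mem, rfl⟩))
      (hlow.2.trans (le_csSup (hη.bddAbove_norm_image_Icc ht.2) ⟨τ, hτ_mem, rfl⟩))

/-- Let `B` be a normed vector space, `T > 0`, and `ξ, η : [0,T] → B`
continuous. For all `N ≥ R > 0` and `t ∈ [0,T]`,
`|min(sup_{s∈[0,t]}‖ξ(s)‖, R) − min(sup_{s∈[0,t]}‖η(s)‖, R)|
  ≤ sup_{s∈[0, T ∧ τ_N^ξ ∧ τ_N^η]} ‖ξ(s) − η(s)‖`. -/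
theorem statement14 {B : Type*} [NormedAddCommGroup B] [NormedSpace ℝ B]
    (T : ℝ) (hT : 0 < T) (ξ η : ℝ → B)
    (hξ : ContinuousOn ξ (Set.Icc 0 T)) (hη : ContinuousOn η (Set.Icc 0 T)) :
    ∀ N R : ℝ, 0 < R → R ≤ N → ∀ t ∈ Set.Icc (0 : ℝ) T,
      |min (sSup ((fun u => ‖ξ u‖) '' Set.Icc 0 t)) R -
          min (sSup ((fun u => ‖η u‖) '' Set.Icc 0 t)) R| ≤
        sSup ((fun u => ‖ξ u - η u‖) '' Set.Icc 0 (stopTime T N ξ η)) :=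
  statement14_general T ξ η hξ hη
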